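/- arXiv:1501.02493 — 3 statements merged into one kernel-verified Lean document; each statement's English description precedes it below -/
import Mathlib

section
/- Let h be a measure function in ℝⁿ, i.e. there exists a non-empty compact set Γ ⊂ ℝⁿ and a finite Radon measure μ with supp μ = Γ and μ(B(γ,r)) ≍ h(r) for all r ∈ (0,1] and γ ∈ Γ. Then there exists a constant c > 0 such that for all j, k ∈ ℕ₀: h(2^{-k-j})/h(2^{-j}) ≥ c · 2^{-kn}. -/
open Filter Real MeasureTheory Metric Set

/-- `h` is a gauge function: positive, continuous, non-decreasing on `(0,1]`,
with `h(r) → 0` as `r → 0`. -/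
def GaugeFunction (h : ℝ → ℝ) : Prop :=
  (∀ r ∈ Set.Ioc (0 : ℝ) 1, 0 < h r) ∧
  ContinuousOn h (Set.Ioc (0 : ℝ) 1) ∧
  MonotoneOn h (Set.Ioc (0 : ℝ) 1) ∧
  Tendsto h (nhdsWithin 0 (Set.Ioi 0)) (nhds 0)

/-- `Γ` is an `h`-set in `ℝⁿ` with associated finite Radon measure `μ`:
`Γ` is nonempty compact, `μ` is a finite measure with support `Γ`, and
`μ(B(γ,r)) ≍ h(r)` for `γ ∈ Γ`, `r ∈ (0,1]`. -/
def IsHSet {n : ℕ} (h : ℝ → ℝ) (Γ : Set (EuclideanSpace ℝ (Fin n)))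
    (μ : Measure (EuclideanSpace ℝ (Fin n))) : Prop :=
  Γ.Nonempty ∧ IsCompact Γ ∧ IsFiniteMeasure μ ∧
  -- `supp μ = Γ`:
  μ Γᶜ = 0 ∧ (∀ γ ∈ Γ, ∀ r : ℝ, 0 < r → 0 < μ (Metric.ball γ r)) ∧
  -- `μ(B(γ,r)) ≍ h(r)`:
  ∃ c₁ c₂ : ℝ, 0 < c₁ ∧ 0 < c₂ ∧ ∀ γ ∈ Γ, ∀ r ∈ Set.Ioc (0 : ℝ) 1,
    ENNReal.ofReal (c₁ * h r) ≤ μ (Metric.closedBall γ r) ∧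
    μ (Metric.closedBall γ r) ≤ ENNReal.ofReal (c₂ * h r)

/-! A maximal `ρ`-separated subset of `Γ ∩ B(γ, R)` is a `ρ`-cover of it, and comparing volumes
of the disjoint balls `B(y, ρ/2)` with `B(γ, R + ρ/2)` bounds its size by `(3R/ρ)ⁿ`. Hence
`c₁ h(R) ≤ μ(B(γ, R)) ≤ (3R/ρ)ⁿ c₂ h(ρ)`. -/

open Module
open scoped Finset ENNReal NNReal

namespace Metric

variable {E : Type*} [NormedAddCommGroup E] [NormedSpace ℝ E] [FiniteDimensional ℝ E]
  {s : Finset E} {C A : Set E} {x : E} {R : ℝ} {ε : ℝ≥0}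

lemma IsSeparated.card_mul_pow_le (hs : IsSeparated (ε : ℝ≥0∞) (s : Set E))
    (hsR : (s : Set E) ⊆ closedBall x R) (hR : 0 ≤ R) (hε : 0 < ε) :
    (#s : ℝ) * (ε : ℝ) ^ finrank ℝ E ≤ (2 * R + ε) ^ finrank ℝ E := by
  borelize E
  let μ : Measure E := Measure.addHaar
  have hdisj : (s : Set E).PairwiseDisjoint fun c => ball c (ε / 2) := by
    intro c hc d hd hcd
    apply ball_disjoint_ball
    have : (ε : ℝ≥0∞) < edist c d := hs hc hd hcd
    rw [edist_nndist, ENNReal.coe_lt_coe, ← NNReal.coe_lt_coe, coe_nndist] at this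
    linarith
  have hsub : (⋃ c ∈ s, ball c (ε / 2)) ⊆ ball x (R + ε / 2) := by
    refine iUnion₂_subset fun c hc => ball_subset_ball' ?_
    linarith [mem_closedBall.1 (hsR hc)]
  have hvol : (#s : ℝ≥0∞) * ENNReal.ofReal ((ε / 2) ^ finrank ℝ E) * μ (ball 0 1) ≤
      ENNReal.ofReal ((R + ε / 2) ^ finrank ℝ E) * μ (ball 0 1) :=
    calc (#s : ℝ≥0∞) * ENNReal.ofReal ((ε / 2) ^ finrank ℝ E) * μ (ball 0 1)
        = μ (⋃ c ∈ s, ball c (ε / 2)) := by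
          rw [measure_biUnion_finset hdisj fun c _ => measurableSet_ball]
          simp only [μ.addHaar_ball_of_pos _ (half_pos (NNReal.coe_pos.2 hε)), Finset.sum_const,
            nsmul_eq_mul, mul_assoc]
      _ ≤ μ (ball x (R + ε / 2)) := measure_mono hsub
      _ = _ := μ.addHaar_ball_of_pos _ (by positivity)
  have hcount := (ENNReal.mul_le_mul_iff_left (measure_ball_pos μ _ one_pos).ne'
    measure_ball_lt_top.ne).1 hvol
  rw [← ENNReal.ofReal_natCast, ← ENNReal.ofReal_mul (by positivity),
    ENNReal.ofReal_le_ofReal_iff (by positivity)] at hcount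
  calc (#s : ℝ) * (ε : ℝ) ^ finrank ℝ E
      = 2 ^ finrank ℝ E * (#s * (ε / 2) ^ finrank ℝ E) := by
        rw [div_pow]; field_simp
    _ ≤ 2 ^ finrank ℝ E * (R + ε / 2) ^ finrank ℝ E := by gcongr
    _ = _ := by rw [← mul_pow]; ring

lemma IsSeparated.finite_of_subset_closedBall (hC : IsSeparated (ε : ℝ≥0∞) C)
    (hCR : C ⊆ closedBall x R) (hε : 0 < ε) : C.Finite := by
  by_contra hinf
  obtain ⟨c, hc⟩ := Set.Infinite.nonempty hinf
  have hR : 0 ≤ R := dist_nonneg.trans (hCR hc)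
  obtain ⟨m, hm⟩ := exists_nat_gt ((2 * R + ε) ^ finrank ℝ E / (ε : ℝ) ^ finrank ℝ E)
  obtain ⟨s, hsC, rfl⟩ := Set.Infinite.exists_subset_card_eq hinf m
  have := (hC.subset hsC).card_mul_pow_le (hsC.trans hCR) hR hε
  rw [div_lt_iff₀ (by positivity)] at hm
  linarith

lemma packingNumber_ne_top_of_subset_closedBall (hA : A ⊆ closedBall x R) (hR : 0 ≤ R)
    (hε : 0 < ε) : packingNumber ε A ≠ ⊤ := by
  refine ne_top_of_le_ne_top
    (ENat.natCast_ne_top ⌊(2 * R + ε) ^ finrank ℝ E / (ε : ℝ) ^ finrank ℝ E⌋₊) ?_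
  refine iSup₂_le fun C hCA => iSup_le fun hC => ?_
  lift C to Finset E using hC.finite_of_subset_closedBall (hCA.trans hA) hε
  rw [Set.encard_coe_eq_coe_finsetCard, Nat.cast_le]
  exact Nat.le_floor <| (le_div_iff₀ (by positivity)).2 <|
    hC.card_mul_pow_le (hCA.trans hA) hR hε

lemma exists_finset_isCover_card_mul_pow_le (hA : A ⊆ closedBall x R) (hR : 0 ≤ R)
    (hε : 0 < ε) :
    ∃ s : Finset E, (s : Set E) ⊆ A ∧ IsCover ε A s ∧
      (#s : ℝ) * (ε : ℝ) ^ finrank ℝ E ≤ (2 * R + ε) ^ finrank ℝ E := by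
  have hfin := packingNumber_ne_top_of_subset_closedBall hA hR hε
  have hCf : (maximalSeparatedSet ε A).Finite := by
    rw [← Set.encard_ne_top_iff, encard_maximalSeparatedSet hfin]
    exact hfin
  refine ⟨hCf.toFinset, by simpa using maximalSeparatedSet_subset,
    by simpa using isCover_maximalSeparatedSet hfin, ?_⟩
  exact IsSeparated.card_mul_pow_le (by simpa using isSeparated_maximalSeparatedSet)
    (by simpa using maximalSeparatedSet_subset.trans hA) hR hε

end Metric

namespace IsHSet

variable {n : ℕ} {h : ℝ → ℝ} {Γ : Set (EuclideanSpace ℝ (Fin n))}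
  {μ : Measure (EuclideanSpace ℝ (Fin n))}

lemma pos (hΓ : IsHSet h Γ μ) {r : ℝ} (hr : r ∈ Ioc 0 1) : 0 < h r := by
  obtain ⟨⟨γ, hγ⟩, -, -, -, hpos, c₁, c₂, -, hc₂, hcmp⟩ := hΓ
  have : 0 < ENNReal.ofReal (c₂ * h r) :=
    (hpos γ hγ r hr.1).trans_le ((measure_mono ball_subset_closedBall).trans (hcmp γ hγ r hr).2)
  exact pos_of_mul_pos_right (ENNReal.ofReal_pos.1 this) hc₂.le

theorem exists_pos_mul_div_pow_le (hΓ : IsHSet h Γ μ) :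
    ∃ c > 0, ∀ ρ R : ℝ, 0 < ρ → ρ ≤ R → R ≤ 1 → c * (ρ / R) ^ n ≤ h ρ / h R := by
  obtain ⟨⟨γ, hγ⟩, -, -, hnull, -, c₁, c₂, hc₁, hc₂, hcmp⟩ := id hΓ
  refine ⟨c₁ / (c₂ * 3 ^ n), by positivity, fun ρ R hρ hρR hR1 => ?_⟩
  have hR : 0 < R := hρ.trans_le hρR
  have hhR : 0 < h R := hΓ.pos ⟨hR, hR1⟩
  have hhρ : 0 < h ρ := hΓ.pos ⟨hρ, hρR.trans hR1⟩
  obtain ⟨s, hsΓ, hcov, hcard⟩ := exists_finset_isCover_card_mul_pow_le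
    (A := closedBall γ R ∩ Γ) inter_subset_left hR.le (ε := ⟨ρ, hρ.le⟩) hρ
  replace hcard : (#s : ℝ) * ρ ^ n ≤ (2 * R + ρ) ^ n := by
    rwa [finrank_euclideanSpace_fin] at hcard
  have hmass : ENNReal.ofReal (c₁ * h R) ≤ ENNReal.ofReal (#s * (c₂ * h ρ)) :=
    calc ENNReal.ofReal (c₁ * h R)
        ≤ μ (closedBall γ R) := (hcmp γ hγ R ⟨hR, hR1⟩).1
      _ = μ (closedBall γ R ∩ Γ) := (measure_inter_conull hnull).symm
      _ ≤ μ (⋃ y ∈ s, closedBall y ρ) := measure_mono hcov.subset_iUnion_closedBall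
      _ ≤ ∑ y ∈ s, μ (closedBall y ρ) := measure_biUnion_finset_le _ _
      _ ≤ ∑ _y ∈ s, ENNReal.ofReal (c₂ * h ρ) :=
          Finset.sum_le_sum fun y hy => (hcmp y (hsΓ hy).2 ρ ⟨hρ, hρR.trans hR1⟩).2
      _ = ENNReal.ofReal (#s * (c₂ * h ρ)) := by
          rw [Finset.sum_const, nsmul_eq_mul, ENNReal.ofReal_mul (Nat.cast_nonneg _),
            ENNReal.ofReal_natCast]
  rw [ENNReal.ofReal_le_ofReal_iff (by positivity)] at hmass
  have key : c₁ * h R * ρ ^ n ≤ c₂ * h ρ * (3 ^ n * R ^ n) :=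
    calc c₁ * h R * ρ ^ n ≤ #s * (c₂ * h ρ) * ρ ^ n := by gcongr
      _ = c₂ * h ρ * (#s * ρ ^ n) := by ring
      _ ≤ c₂ * h ρ * (3 * R) ^ n := by gcongr; exact hcard.trans (by gcongr; linarith)
      _ = c₂ * h ρ * (3 ^ n * R ^ n) := by rw [mul_pow]
  rw [div_pow, div_mul_div_comm, div_le_div_iff₀ (by positivity) hhR]
  linear_combination key

end IsHSet

theorem measure_function_lower_doubling_general {n : ℕ} (h : ℝ → ℝ)
    (hmeas : ∃ (Γ : Set (EuclideanSpace ℝ (Fin n)))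
      (μ : Measure (EuclideanSpace ℝ (Fin n))), IsHSet h Γ μ) :
    ∃ c : ℝ, 0 < c ∧ ∀ j k : ℕ,
      c * 2 ^ (-((k : ℝ) * n)) ≤ h (2 ^ (-((k : ℝ) + j))) / h (2 ^ (-(j : ℝ))) := by
  obtain ⟨Γ, μ, hΓ⟩ := hmeas
  obtain ⟨c, hc, hbound⟩ := hΓ.exists_pos_mul_div_pow_le
  refine ⟨c, hc, fun j k => ?_⟩
  have hratio : (2 : ℝ) ^ (-((k : ℝ) + j)) / 2 ^ (-(j : ℝ)) = 2 ^ (-(k : ℝ)) := by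
    rw [← rpow_sub two_pos]; ring_nf
  have := hbound (2 ^ (-((k : ℝ) + j))) (2 ^ (-(j : ℝ))) (by positivity)
    (rpow_le_rpow_of_exponent_le one_le_two (by linarith [(k.cast_nonneg : (0 : ℝ) ≤ k)]))
    (rpow_le_one_of_one_le_of_nonpos one_le_two (by simp))
  rwa [hratio, ← rpow_natCast, ← rpow_mul two_pos.le, neg_mul] at this

theorem measure_function_lower_doubling {n : ℕ} (hn : 0 < n) (h : ℝ → ℝ)
    (hgauge : GaugeFunction h)
    (hmeas : ∃ (Γ : Set (EuclideanSpace ℝ (Fin n)))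
      (μ : Measure (EuclideanSpace ℝ (Fin n))), IsHSet h Γ μ) :
    ∃ c : ℝ, 0 < c ∧ ∀ j k : ℕ,
      c * 2 ^ (-((k : ℝ) * n)) ≤ h (2 ^ (-((k : ℝ) + j))) / h (2 ^ (-(j : ℝ))) :=
  measure_function_lower_doubling_general h hmeas
end

section
/- Let h(r) = r^d Ψ(r) with 0 < d < n and Ψ an admissible function (positive monotone on (0,1] with Ψ(2^{-2j}) ≍ Ψ(2^{-j})). Then there exist constants c > 0 and ε > 0 such that h(2^{-j-k})/h(2^{-j}) ≥ c · 2^{-(n-ε)k} for all j, k ∈ ℕ₀; i.e. h satisfies the porosity criterion. In contrast, for d = n and Ψ ≡ 1 (i.e. h(r) = r^n) no such constants exist. -/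
open Real Set

/-! For antitone `φ j = Ψ (2 ^ (-j))` with `c φ m ≤ φ (2m)`, the decay is subexponential: for
every `r < 1` there is `C > 0` with `C r^k φ j ≤ φ (j + k)`. Once `r^L ≤ c`, going from `m + k'` to
`m + k` with `k - k' = ⌊(m + k)/2⌋ ≥ L` costs one doubling factor `c`, which `r^(k - k') ≤ r^L`
pays for. With `r = 2^(-δ)`, `δ = (s - d)/2`, this gives the criterion for `t^d Ψ(t)` with `ε = δ`,
whereas for `t^s` the ratio is exactly `2^(-s k)`, which is eventually below `c 2^(-(s - ε) k)`. -/

def SatisfiesPorosityCriterion (s : ℝ) (h : ℝ → ℝ) : Prop :=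
  ∃ c ε : ℝ, 0 < c ∧ 0 < ε ∧ ∀ j k : ℕ,
    c * 2 ^ (-((s - ε) * k)) ≤ h (2 ^ (-((j : ℝ) + k))) / h (2 ^ (-(j : ℝ)))

namespace Antitone

variable {φ : ℕ → ℝ} {c r : ℝ}

theorem const_mul_pow_mul_le_of_doubling (hφ : Antitone φ) (hφ0 : ∀ m, 0 ≤ φ m)
    (hc : 0 ≤ c) (hr : 0 ≤ r) (hr1 : r ≤ 1) {L : ℕ} (hL : 0 < L) (hrL : r ^ L ≤ c)
    (hdouble : ∀ m, 0 < m → c * φ m ≤ φ (2 * m)) {m : ℕ} (hm : L ≤ m) (k : ℕ) :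
    c * r ^ k * φ m ≤ φ (m + k) := by
  induction k using Nat.strong_induction_on with
  | _ k ih =>
  rcases le_or_gt k m with hkm | hmk
  · calc c * r ^ k * φ m ≤ c * φ m :=
          mul_le_mul_of_nonneg_right (mul_le_of_le_one_right hc (pow_le_one₀ hr hr1)) (hφ0 m)
      _ ≤ φ (2 * m) := hdouble m (by omega)
      _ ≤ φ (m + k) := hφ (by omega)
  · set l := (m + k) / 2
    set k' := k - l
    have hlL : L ≤ l := by omega
    calc c * r ^ k * φ m = r ^ l * (c * r ^ k' * φ m) := by
          rw [show k = l + k' by omega, pow_add]; ring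
      _ ≤ r ^ l * φ (m + k') := mul_le_mul_of_nonneg_left (ih k' (by omega)) (by positivity)
      _ ≤ c * φ (m + k') :=
          mul_le_mul_of_nonneg_right ((pow_le_pow_of_le_one hr hr1 hlL).trans hrL) (hφ0 _)
      _ ≤ φ (2 * (m + k')) := hdouble _ (by omega)
      _ ≤ φ (m + k) := hφ (by omega)

theorem exists_pow_mul_le_of_doubling (hφ : Antitone φ) (hφ0 : ∀ m, 0 < φ m) (hc : 0 < c)
    (hdouble : ∀ m, 0 < m → c * φ m ≤ φ (2 * m)) (hr : 0 ≤ r) (hr1 : r < 1) :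
    ∃ C > 0, ∀ j k, C * r ^ k * φ j ≤ φ (j + k) := by
  obtain ⟨N, hN⟩ := exists_pow_lt_of_lt_one hc hr1
  set L := N + 1
  have hrL : r ^ L ≤ c := (pow_le_pow_of_le_one hr hr1.le N.le_succ).trans hN.le
  have hφL := hφ0 L
  have hφ0' := hφ0 0
  refine ⟨c * (φ L / φ 0), by positivity, fun j k => ?_⟩
  have hmax : φ L / φ 0 * φ j ≤ φ (max j L) := by
    rcases le_total j L with hjL | hLj
    · rw [max_eq_right hjL, div_mul_eq_mul_div, div_le_iff₀ hφ0']
      exact mul_le_mul_of_nonneg_left (hφ (Nat.zero_le j)) hφL.le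
    · rw [max_eq_left hLj]
      exact mul_le_of_le_one_left (hφ0 j).le ((div_le_one hφ0').2 (hφ (Nat.zero_le L)))
  calc c * (φ L / φ 0) * r ^ k * φ j = c * r ^ k * (φ L / φ 0 * φ j) := by ring
    _ ≤ c * r ^ k * φ (max j L) := by gcongr
    _ ≤ φ (max j L + k) := hφ.const_mul_pow_mul_le_of_doubling (fun m => (hφ0 m).le) hc.le hr
        hr1.le N.succ_pos hrL hdouble (le_max_right j L) k
    _ ≤ φ (j + k) := hφ (by omega)

end Antitone

theorem two_rpow_neg_mem_Ioc {x : ℝ} (hx : 0 ≤ x) : (2 : ℝ) ^ (-x) ∈ Ioc 0 1 :=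
  ⟨rpow_pos_of_pos two_pos _, rpow_le_one_of_one_le_of_nonpos one_le_two (neg_nonpos.2 hx)⟩

theorem exists_mul_two_rpow_mul_le_of_doubling {Ψ : ℝ → ℝ}
    (hpos : ∀ t ∈ Ioc (0 : ℝ) 1, 0 < Ψ t)
    (hmono : MonotoneOn Ψ (Ioc (0 : ℝ) 1) ∨ AntitoneOn Ψ (Ioc (0 : ℝ) 1)) {c : ℝ} (hc : 0 < c)
    (hdouble : ∀ j : ℕ, 1 ≤ j → c * Ψ (2 ^ (-(j : ℝ))) ≤ Ψ (2 ^ (-(2 * j : ℝ))))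
    {δ : ℝ} (hδ : 0 < δ) :
    ∃ C > 0, ∀ j k : ℕ, C * 2 ^ (-(δ * k)) * Ψ (2 ^ (-(j : ℝ))) ≤ Ψ (2 ^ (-((j : ℝ) + k))) := by
  have hle : ∀ {x y : ℝ}, x ≤ y → (2 : ℝ) ^ (-y) ≤ 2 ^ (-x) := fun h =>
    rpow_le_rpow_of_exponent_le one_le_two (neg_le_neg h)
  rcases hmono with hmono | hanti
  · set φ : ℕ → ℝ := fun j => Ψ (2 ^ (-(j : ℝ)))
    have hφ : Antitone φ := fun i j hij =>
      hmono (two_rpow_neg_mem_Ioc j.cast_nonneg) (two_rpow_neg_mem_Ioc i.cast_nonneg)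
        (hle (Nat.cast_le.2 hij))
    obtain ⟨C, hC, hCφ⟩ := hφ.exists_pow_mul_le_of_doubling
      (fun m => hpos _ (two_rpow_neg_mem_Ioc m.cast_nonneg)) hc
      (fun m hm => by simpa only [φ, Nat.cast_mul, Nat.cast_ofNat] using hdouble m hm)
      (rpow_nonneg zero_le_two (-δ))
      (rpow_lt_one_of_one_lt_of_neg one_lt_two (neg_lt_zero.2 hδ))
    refine ⟨C, hC, fun j k => ?_⟩
    simpa only [φ, Nat.cast_add, ← rpow_natCast, ← rpow_mul zero_le_two, neg_mul] using hCφ j k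
  · refine ⟨1, one_pos, fun j k => ?_⟩
    have hΨj := hpos _ (two_rpow_neg_mem_Ioc j.cast_nonneg)
    calc 1 * 2 ^ (-(δ * k)) * Ψ (2 ^ (-(j : ℝ))) ≤ Ψ (2 ^ (-(j : ℝ))) :=
          mul_le_of_le_one_left hΨj.le (by
            rw [one_mul]
            exact rpow_le_one_of_one_le_of_nonpos one_le_two (neg_nonpos.2 (by positivity)))
      _ ≤ Ψ (2 ^ (-((j : ℝ) + k))) :=
          hanti (two_rpow_neg_mem_Ioc (by positivity)) (two_rpow_neg_mem_Ioc j.cast_nonneg)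
            (hle (by simp))

theorem two_rpow_neg_add_rpow_div (x y s : ℝ) :
    ((2 : ℝ) ^ (-(x + y))) ^ s / ((2 : ℝ) ^ (-x)) ^ s = 2 ^ (-(s * y)) := by
  rw [← rpow_mul zero_le_two, ← rpow_mul zero_le_two, ← rpow_sub two_pos]
  ring_nf

theorem satisfiesPorosityCriterion_rpow_mul {d s : ℝ} (hds : d < s) {Ψ : ℝ → ℝ}
    (hpos : ∀ t ∈ Ioc (0 : ℝ) 1, 0 < Ψ t)
    (hmono : MonotoneOn Ψ (Ioc (0 : ℝ) 1) ∨ AntitoneOn Ψ (Ioc (0 : ℝ) 1)) {c : ℝ} (hc : 0 < c)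
    (hdouble : ∀ j : ℕ, 1 ≤ j → c * Ψ (2 ^ (-(j : ℝ))) ≤ Ψ (2 ^ (-(2 * j : ℝ)))) :
    SatisfiesPorosityCriterion s (fun r => r ^ d * Ψ r) := by
  set δ := (s - d) / 2
  have hδ : 0 < δ := half_pos (sub_pos.2 hds)
  obtain ⟨C, hC, hCΨ⟩ := exists_mul_two_rpow_mul_le_of_doubling hpos hmono hc hdouble hδ
  refine ⟨C, δ, hC, hδ, fun j k => ?_⟩
  have hΨj := hpos _ (two_rpow_neg_mem_Ioc j.cast_nonneg)
  rw [mul_div_mul_comm, two_rpow_neg_add_rpow_div, ← mul_div_assoc, le_div_iff₀ hΨj,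
    show -((s - δ) * k) = -(d * k) + -(δ * k) by ring, rpow_add two_pos]
  calc C * (2 ^ (-(d * k)) * 2 ^ (-(δ * k))) * Ψ (2 ^ (-(j : ℝ)))
      = 2 ^ (-(d * k)) * (C * 2 ^ (-(δ * k)) * Ψ (2 ^ (-(j : ℝ)))) := by ring
    _ ≤ 2 ^ (-(d * k)) * Ψ (2 ^ (-((j : ℝ) + k))) := by gcongr; exact hCΨ j k

theorem not_satisfiesPorosityCriterion_rpow (s : ℝ) :
    ¬ SatisfiesPorosityCriterion s (fun r => r ^ s) := by
  rintro ⟨c, ε, hc, hε, h⟩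
  obtain ⟨k, hk⟩ := pow_unbounded_of_one_lt c⁻¹ (one_lt_rpow one_lt_two hε)
  have hk' := h 0 k
  rw [two_rpow_neg_add_rpow_div, show -((s - ε) * k) = -(s * k) + ε * k by ring,
    rpow_add two_pos, rpow_mul zero_le_two, rpow_natCast] at hk'
  have hbound : c * (2 ^ ε) ^ k ≤ 1 := by
    nlinarith [rpow_pos_of_pos two_pos (-(s * k))]
  rw [inv_lt_iff_one_lt_mul₀ hc] at hk
  linarith

theorem porosity_criterion_d_Psi_general (n : ℕ) (d : ℝ) (hdn : d < n)
    (Ψ : ℝ → ℝ)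
    (hpos : ∀ t ∈ Set.Ioc (0 : ℝ) 1, 0 < Ψ t)
    (hmono : MonotoneOn Ψ (Set.Ioc (0 : ℝ) 1) ∨ AntitoneOn Ψ (Set.Ioc (0 : ℝ) 1))
    (hadm : ∃ c C : ℝ, 0 < c ∧ 0 < C ∧ ∀ j : ℕ, 1 ≤ j →
      c * Ψ (2 ^ (-(j : ℝ))) ≤ Ψ (2 ^ (-(2 * j : ℝ))) ∧
      Ψ (2 ^ (-(2 * j : ℝ))) ≤ C * Ψ (2 ^ (-(j : ℝ)))) :
    (∃ c ε : ℝ, 0 < c ∧ 0 < ε ∧ ∀ j k : ℕ,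
      c * 2 ^ (-(((n : ℝ) - ε) * k)) ≤
        ((2 : ℝ) ^ (-((j : ℝ) + k))) ^ d * Ψ (2 ^ (-((j : ℝ) + k))) /
          (((2 : ℝ) ^ (-(j : ℝ))) ^ d * Ψ (2 ^ (-(j : ℝ))))) ∧
    ¬ (∃ c ε : ℝ, 0 < c ∧ 0 < ε ∧ ∀ j k : ℕ,
      c * 2 ^ (-(((n : ℝ) - ε) * k)) ≤
        ((2 : ℝ) ^ (-((j : ℝ) + k))) ^ (n : ℝ) / ((2 : ℝ) ^ (-(j : ℝ))) ^ (n : ℝ)) := by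
  obtain ⟨c, _, hc, _, hdouble⟩ := hadm
  exact ⟨satisfiesPorosityCriterion_rpow_mul hdn hpos hmono hc (fun j hj => (hdouble j hj).1),
    not_satisfiesPorosityCriterion_rpow n⟩

theorem porosity_criterion_d_Psi (n : ℕ) (d : ℝ) (hd : 0 < d) (hdn : d < n)
    (Ψ : ℝ → ℝ)
    (hpos : ∀ t ∈ Set.Ioc (0 : ℝ) 1, 0 < Ψ t)
    (hmono : MonotoneOn Ψ (Set.Ioc (0 : ℝ) 1) ∨ AntitoneOn Ψ (Set.Ioc (0 : ℝ) 1))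
    (hadm : ∃ c C : ℝ, 0 < c ∧ 0 < C ∧ ∀ j : ℕ, 1 ≤ j →
      c * Ψ (2 ^ (-(j : ℝ))) ≤ Ψ (2 ^ (-(2 * j : ℝ))) ∧
      Ψ (2 ^ (-(2 * j : ℝ))) ≤ C * Ψ (2 ^ (-(j : ℝ)))) :
    (∃ c ε : ℝ, 0 < c ∧ 0 < ε ∧ ∀ j k : ℕ,
      c * 2 ^ (-(((n : ℝ) - ε) * k)) ≤
        ((2 : ℝ) ^ (-((j : ℝ) + k))) ^ d * Ψ (2 ^ (-((j : ℝ) + k))) /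
          (((2 : ℝ) ^ (-(j : ℝ))) ^ d * Ψ (2 ^ (-(j : ℝ))))) ∧
    ¬ (∃ c ε : ℝ, 0 < c ∧ 0 < ε ∧ ∀ j k : ℕ,
      c * 2 ^ (-(((n : ℝ) - ε) * k)) ≤
        ((2 : ℝ) ^ (-((j : ℝ) + k))) ^ (n : ℝ) / ((2 : ℝ) ^ (-(j : ℝ))) ^ (n : ℝ)) :=
  porosity_criterion_d_Psi_general n d hdn Ψ hpos hmono hadm
end

section
/- Let 0 < p < 1 and p < q < ∞, and define v_p by 1/v_p = 1/p − 1/q. Let h be a gauge function with h_j := h(2^{-j}) → 0 as j → ∞, and let σ be a sequence of positive reals with lim_{j→∞} h_j σ_j^{v_p} = 0. If there exist r ∈ [p, min{q,1}] and v_r with 1/v_r = 1/r − 1/q such that ∑_j (σ_j^{-1} h_j^{1/r − 1/p})^{v_r} < ∞, then ∑_j σ_j^{-v_p} < ∞. -/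
/-!
With `e = 1/r - 1/p ≤ 0`, the relations `1/v_p + e = 1/v_r` give the factorization
`σ_j^{-v_p} = (σ_j⁻¹ h_j^e)^{v_r} · (h_j σ_j^{v_p})^{-e v_r}`. The first factor is summable by
hypothesis, and the second converges because `h_j σ_j^{v_p}` does and `-e v_r ≥ 0`.
-/

open Filter Real Asymptotics

theorem Summable.mul_of_tendsto {ι : Type*} {f g : ι → ℝ} (hf : Summable f) {c : ℝ}
    (hg : Tendsto g cofinite (nhds c)) : Summable (fun i => f i * g i) :=
  summable_of_isBigO hf <| by
    simpa only [mul_one] using (isBigO_refl f cofinite).mul (hg.isBigO_one ℝ)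

theorem add_mul_mul_eq_of_inv_add_eq {a b e : ℝ} (ha : a ≠ 0) (hb : b ≠ 0)
    (h : a⁻¹ + e = b⁻¹) : b + a * e * b = a := by
  field_simp at h
  linear_combination h

theorem Real.rpow_neg_eq_mul_rpow_mul_rpow {x y a b e : ℝ} (hx : 0 < x) (hy : 0 < y)
    (hab : b + a * e * b = a) :
    x ^ (-a) = (x⁻¹ * y ^ e) ^ b * (y * x ^ a) ^ (-(e * b)) := by
  rw [mul_rpow (inv_nonneg.2 hx.le) (rpow_nonneg hy.le _), mul_rpow hy.le (rpow_nonneg hx.le _),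
    inv_rpow hx.le, ← rpow_mul hy.le, ← rpow_mul hx.le, ← rpow_neg hx.le, mul_assoc,
    ← mul_assoc (y ^ _), ← rpow_add hy, add_neg_cancel, rpow_zero, one_mul, ← rpow_add hx]
  congr 1
  linear_combination hab

theorem conjecture_consistency_general (p q vp : ℝ) (hp0 : 0 < p)
    (hpq : p < q) (hvp : 1 / vp = 1 / p - 1 / q)
    (h σ : ℕ → ℝ) (hhpos : ∀ j, 0 < h j) (hσpos : ∀ j, 0 < σ j)
    (hlim : Tendsto (fun j => h j * σ j ^ vp) atTop (nhds 0))
    (hex : ∃ r vr : ℝ, p ≤ r ∧ r ≤ min q 1 ∧ 1 / vr = 1 / r - 1 / q ∧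
      Summable (fun j => ((σ j)⁻¹ * (h j) ^ (1 / r - 1 / p)) ^ vr)) :
    Summable (fun j => (σ j) ^ (-vp)) := by
  obtain ⟨r, vr, hpr, hrq, hvr, hsum⟩ := hex
  have hr0 : 0 < r := hp0.trans_le hpr
  have hvp0 : vp ≠ 0 := by
    refine (one_div_pos.1 ?_).ne'
    rw [hvp, sub_pos]
    exact one_div_lt_one_div_of_lt hp0 hpq
  have hvr0 : vr ≠ 0 := by
    rintro rfl
    simp [summable_const_iff] at hsum
  have hvr_nonneg : 0 ≤ vr := by
    refine one_div_nonneg.1 ?_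
    rw [hvr, sub_nonneg]
    exact one_div_le_one_div_of_le hr0 (hrq.trans (min_le_left q 1))
  have he : 1 / r - 1 / p ≤ 0 := sub_nonpos.2 (one_div_le_one_div_of_le hp0 hpr)
  have hexp : vr + vp * (1 / r - 1 / p) * vr = vp :=
    add_mul_mul_eq_of_inv_add_eq hvp0 hvr0 (by simp only [← one_div]; linarith)
  have hconv := hlim.rpow_const (p := -((1 / r - 1 / p) * vr))
    (Or.inr (neg_nonneg.2 (mul_nonpos_of_nonpos_of_nonneg he hvr_nonneg)))
  rw [← Nat.cofinite_eq_atTop] at hconv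
  refine (hsum.mul_of_tendsto hconv).congr fun j => ?_
  exact (rpow_neg_eq_mul_rpow_mul_rpow (hσpos j) (hhpos j) hexp).symm

theorem conjecture_consistency (p q vp : ℝ) (hp0 : 0 < p) (hp1 : p < 1)
    (hpq : p < q) (hvp : 1 / vp = 1 / p - 1 / q)
    (h σ : ℕ → ℝ) (hhpos : ∀ j, 0 < h j) (hσpos : ∀ j, 0 < σ j)
    (hh0 : Tendsto h atTop (nhds 0))
    (hlim : Tendsto (fun j => h j * σ j ^ vp) atTop (nhds 0))
    (hex : ∃ r vr : ℝ, p ≤ r ∧ r ≤ min q 1 ∧ 1 / vr = 1 / r - 1 / q ∧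
      Summable (fun j => ((σ j)⁻¹ * (h j) ^ (1 / r - 1 / p)) ^ vr)) :
    Summable (fun j => (σ j) ^ (-vp)) :=
  conjecture_consistency_general p q vp hp0 hpq hvp h σ hhpos hσpos hlim hex
end
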